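/- Let T be a smooth, symmetric, stationary energy-momentum tensor on Minkowski space integrable over Σ, which is traceless (η_{αβ}T^{αβ} = 0, equivalently T^{00} = T^{11}+T^{22}+T^{33} pointwise), has isotropic spatial integrals ∫_Σ T^{11} d³x = ∫_Σ T^{22} d³x = ∫_Σ T^{33} d³x, and has vanishing total spatial momentum P^a[Σ,T] = 0 for a = 1,2,3. Then ∫_Σ T^{11} d³x = (1/3)P⁰[Σ,T], and for the pure boost Λ in the x¹-direction with velocity parameter β: P¹[Σ, Λ·T] = (4/3)βγ P⁰[Σ,T] and P⁰[Σ, Λ·T] = γ(1 + β²/3)P⁰[Σ,T]. -/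

import Mathlib

/-! On `Σ`, the inverse boost sends `(0, y)` to a time translate of `(0, y')`, where `y'` is `y` with
its first coordinate dilated by `γ`. By stationarity the time shift is invisible, and the dilation
contributes the Jacobian `γ⁻¹`, so `P^α[Σ, Λ·T] = γ⁻¹ Λ^α_γ Λ^0_δ ∫_Σ T^{γδ}`. Only the `(0,1)` block
of the boost enters; there symmetry and `P¹ = 0` kill `∫ T⁰¹ = ∫ T¹⁰`, while tracelessness and
isotropy give `∫ T¹¹ = P⁰/3`. -/

open MeasureTheory

noncomputable section

/-- Embedding of the spacelike hyperplane `Σ = {x⁰ = 0}` into Minkowski space `ℝ⁴`. -/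
def emb (y : Fin 3 → ℝ) : Fin 4 → ℝ := Fin.cons 0 y

/-- Total four-momentum `P^α[Σ,T] := ∫_Σ T^{α0} d³x`. -/
def Pmom (T : (Fin 4 → ℝ) → Fin 4 → Fin 4 → ℝ) (α : Fin 4) : ℝ :=
  ∫ y : Fin 3 → ℝ, T (emb y) α 0

/-- Active Lorentz transformation of a (2,0)-tensor field:
`(Λ·T)^{αβ}(x) = Λ^α_γ Λ^β_δ T^{γδ}(Λ⁻¹x)`. -/
def actT (Λ : Matrix (Fin 4) (Fin 4) ℝ) (T : (Fin 4 → ℝ) → Fin 4 → Fin 4 → ℝ) :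
    (Fin 4 → ℝ) → Fin 4 → Fin 4 → ℝ :=
  fun x α β => ∑ γ : Fin 4, ∑ δ : Fin 4, Λ α γ * Λ β δ * T (Λ⁻¹.mulVec x) γ δ

/-- Lorentz factor `γ = 1/√(1−β²)`. -/
def gam (b : ℝ) : ℝ := 1 / Real.sqrt (1 - b ^ 2)

/-- The pure boost in the `x¹`-direction with velocity parameter `b`. -/
def boost1 (b : ℝ) : Matrix (Fin 4) (Fin 4) ℝ :=
  Matrix.of fun i j =>
    if i = 0 ∧ j = 0 then gam b
    else if i = 0 ∧ j = 1 then b * gam b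
    else if i = 1 ∧ j = 0 then b * gam b
    else if i = 1 ∧ j = 1 then gam b
    else if i = j then 1 else 0

theorem apply_add_smul_eq_of_fderiv_apply_eq_zero {E F : Type*} [NormedAddCommGroup E]
    [NormedSpace ℝ E] [NormedAddCommGroup F] [NormedSpace ℝ F] {f : E → F}
    (hf : Differentiable ℝ f) {v : E} (h : ∀ x, fderiv ℝ f x v = 0) (x : E) (t : ℝ) :
    f (x + t • v) = f x := by
  have hderiv (s : ℝ) : HasDerivAt (fun t : ℝ => f (x + t • v)) 0 s := by
    have hline : HasDerivAt (fun t : ℝ => x + t • v) v s := by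
      simpa using ((hasDerivAt_id s).smul_const v).const_add x
    simpa [Function.comp_def, h] using (hf _).hasFDerivAt.comp_hasDerivAt s hline
  simpa using is_const_of_deriv_eq_zero (fun s => (hderiv s).differentiableAt)
    (fun s => (hderiv s).deriv) t 0

section LinearChangeOfVariables

variable {E F : Type*} [NormedAddCommGroup E] [NormedSpace ℝ E] [MeasurableSpace E] [BorelSpace E]
  [FiniteDimensional ℝ E] (μ : Measure E) [μ.IsAddHaarMeasure]
  [NormedAddCommGroup F] [NormedSpace ℝ F]

theorem integral_comp_linearMap {f : E →ₗ[ℝ] E} (hf : LinearMap.det f ≠ 0) (g : E → F) :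
    ∫ x, g (f x) ∂μ = |LinearMap.det f|⁻¹ • ∫ x, g x ∂μ := by
  let e := (f.equivOfDetNeZero hf).toContinuousLinearEquiv.toHomeomorph.toMeasurableEquiv
  have hmap : Measure.map e μ = ENNReal.ofReal |LinearMap.det f|⁻¹ • μ := by
    rw [← abs_inv]; exact Measure.map_linearMap_addHaar_eq_smul_addHaar μ hf
  change ∫ x, g (e x) ∂μ = _
  rw [← integral_map_equiv e g, hmap, integral_smul_measure,
    ENNReal.toReal_ofReal (by positivity)]

theorem integral_comp_mul_left_pi {ι : Type*} [Fintype ι] (d : ι → ℝ) (hd : ∏ i, d i ≠ 0)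
    (g : (ι → ℝ) → F) :
    ∫ y, g (d * y) = |∏ i, d i|⁻¹ • ∫ y, g y := by
  classical
  have hdet : LinearMap.det (Matrix.toLin' (Matrix.diagonal d)) = ∏ i, d i := by
    rw [LinearMap.det_toLin', Matrix.det_diagonal]
  have happ (y : ι → ℝ) : Matrix.toLin' (Matrix.diagonal d) y = d * y := by
    ext i; simp [Matrix.mulVec_diagonal]
  have h := integral_comp_linearMap volume (hdet ▸ hd) g
  simp only [happ, hdet] at h
  exact h

end LinearChangeOfVariables

section Boost

variable {b : ℝ}

theorem gam_pos (hb : |b| < 1) : 0 < gam b := by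
  have : 0 < 1 - b ^ 2 := by nlinarith [abs_lt.1 hb]
  unfold gam; positivity

theorem gam_neg (b : ℝ) : gam (-b) = gam b := by
  simp [gam]

theorem gam_sq_mul_one_sub_sq (hb : |b| < 1) : gam b ^ 2 * (1 - b ^ 2) = 1 := by
  have : 0 < 1 - b ^ 2 := by nlinarith [abs_lt.1 hb]
  rw [gam, div_pow, Real.sq_sqrt this.le]
  field_simp

theorem inv_boost1 (hb : |b| < 1) : (boost1 b)⁻¹ = boost1 (-b) := by
  have := gam_sq_mul_one_sub_sq hb
  refine Matrix.inv_eq_right_inv ?_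
  ext i j
  fin_cases i <;> fin_cases j <;>
    simp [boost1, Matrix.mul_apply, Fin.sum_univ_four, gam_neg] <;>
    linarith

theorem inv_boost1_mulVec_emb (hb : |b| < 1) (y : Fin 3 → ℝ) :
    (boost1 b)⁻¹.mulVec (emb y) =
      emb (Pi.mulSingle 0 (gam b) * y) + (-(b * gam b * y 0)) • (Pi.single 0 1 : Fin 4 → ℝ) := by
  rw [inv_boost1 hb]
  ext i
  fin_cases i <;>
    simp [boost1, emb, Matrix.mulVec, dotProduct, Fin.sum_univ_four, gam_neg]
  -- the transverse coordinates, where `Pi.mulSingle 0 (gam b)` is `1`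
  all_goals exact (one_mul _).symm

end Boost

theorem Pmom_actT_boost1 {T : (Fin 4 → ℝ) → Fin 4 → Fin 4 → ℝ} (hT : Differentiable ℝ T)
    (hstat : ∀ x α β, fderiv ℝ (fun z => T z α β) x (Pi.single 0 1) = 0)
    (hInt : ∀ α β, Integrable fun y : Fin 3 → ℝ => T (emb y) α β) {b : ℝ} (hb : |b| < 1)
    (α : Fin 4) :
    Pmom (actT (boost1 b) T) α =
      (gam b)⁻¹ * ∑ γ, ∑ δ, boost1 b α γ * boost1 b 0 δ * ∫ y, T (emb y) γ δ := by
  set G : (Fin 3 → ℝ) → ℝ := fun z => ∑ γ, ∑ δ, boost1 b α γ * boost1 b 0 δ * T (emb z) γ δ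
  have hshift (y : Fin 3 → ℝ) (γ δ : Fin 4) :
      T ((boost1 b)⁻¹.mulVec (emb y)) γ δ = T (emb (Pi.mulSingle 0 (gam b) * y)) γ δ := by
    rw [inv_boost1_mulVec_emb hb]
    exact apply_add_smul_eq_of_fderiv_apply_eq_zero
      (differentiable_pi.1 (differentiable_pi.1 hT γ) δ) (hstat · γ δ) _ _
  have hg := gam_pos hb
  calc Pmom (actT (boost1 b) T) α = ∫ y, G ((Pi.mulSingle 0 (gam b) : Fin 3 → ℝ) * y) := by
        simp only [Pmom, actT, hshift, G]
    _ = (gam b)⁻¹ * ∫ z, G z := by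
        rw [integral_comp_mul_left_pi _ (by simpa using hg.ne'), Fintype.prod_pi_mulSingle',
          abs_of_pos hg, smul_eq_mul]
    _ = _ := by
        simp only [G]
        rw [integral_finsetSum _ fun γ _ => integrable_finsetSum _ fun δ _ =>
          (hInt γ δ).const_mul _]
        simp only [integral_finsetSum _ fun δ _ => (hInt _ δ).const_mul _, integral_const_mul]

/-- **the 4/3-problem.** For a smooth, symmetric, stationary, traceless
energy-momentum tensor with isotropic spatial integrals and vanishing total spatial momentum:
`∫T¹¹ = P⁰/3`, and under the pure boost in the `x¹`-direction,
`P̄¹ = (4/3)βγP⁰` and `P̄⁰ = γ(1+β²/3)P⁰`. -/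
theorem four_thirds_problem
    (T : (Fin 4 → ℝ) → Fin 4 → Fin 4 → ℝ)
    (hsmooth : ContDiff ℝ (⊤ : ℕ∞) T)
    (hsym : ∀ x α β, T x α β = T x β α)
    (hstat : ∀ x α β, fderiv ℝ (fun z => T z α β) x (Pi.single 0 1) = 0)
    (hInt : ∀ α β, Integrable fun y : Fin 3 → ℝ => T (emb y) α β)
    (htrace : ∀ x, T x 0 0 = T x 1 1 + T x 2 2 + T x 3 3)
    (hiso12 : (∫ y : Fin 3 → ℝ, T (emb y) 1 1) = ∫ y : Fin 3 → ℝ, T (emb y) 2 2)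
    (hiso13 : (∫ y : Fin 3 → ℝ, T (emb y) 1 1) = ∫ y : Fin 3 → ℝ, T (emb y) 3 3)
    (hPzero : ∀ a : Fin 3, Pmom T a.succ = 0)
    (b : ℝ) (hb : b ∈ Set.Ioo (-1 : ℝ) 1) :
    (∫ y : Fin 3 → ℝ, T (emb y) 1 1) = (1 / 3) * Pmom T 0 ∧
    Pmom (actT (boost1 b) T) 1 = (4 / 3) * b * gam b * Pmom T 0 ∧
    Pmom (actT (boost1 b) T) 0 = gam b * (1 + b ^ 2 / 3) * Pmom T 0 := by
  have hb' : |b| < 1 := abs_lt.2 hb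
  have hI10 : (∫ y : Fin 3 → ℝ, T (emb y) 1 0) = 0 := hPzero 0
  have hI01 : (∫ y : Fin 3 → ℝ, T (emb y) 0 1) = 0 := by simpa only [hsym _ 1 0] using hI10
  have hI11 : (∫ y : Fin 3 → ℝ, T (emb y) 1 1) = (1 / 3) * Pmom T 0 := by
    have hP0 : Pmom T 0 = ∫ y, (T (emb y) 1 1 + T (emb y) 2 2 + T (emb y) 3 3) :=
      integral_congr_ae (.of_forall fun y => htrace (emb y))
    have hI12 : Integrable fun y : Fin 3 → ℝ => T (emb y) 1 1 + T (emb y) 2 2 :=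
      (hInt 1 1).add (hInt 2 2)
    rw [hP0, integral_add hI12 (hInt 3 3),
      integral_add (hInt 1 1) (hInt 2 2), ← hiso12, ← hiso13]
    ring
  have hP0 : (∫ y : Fin 3 → ℝ, T (emb y) 0 0) = Pmom T 0 := rfl
  have hg := (gam_pos hb').ne'
  refine ⟨hI11, ?_, ?_⟩ <;>
    rw [Pmom_actT_boost1 (hsmooth.differentiable (by simp)) hstat hInt hb'] <;>
    simp only [Fin.sum_univ_four, boost1, Matrix.of_apply, Fin.reduceEq, Fin.isValue, true_and,
      false_and, ↓reduceIte, mul_zero, zero_mul, add_zero, hP0, hI01, hI10, hI11] <;>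
    field_simp <;>
    ring

end
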